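/- For every integer n ≥ 1 there exists a constant C_n = C(β,n) such that for all z ≥ 0 and all v with v ≢ ±π (mod 2βπ): |z^{n−1} · (dⁿ/dzⁿ)(e^z · E(z,v))| ≤ C_n. Moreover there exists a constant C = C(β) such that |e^z · E(z,v)| ≤ C for all such z and v. -/

import Mathlib

open Real MeasureTheory

/-- The function `E(z,v)` appearing in Carslaw's representation of the conical heat kernel. -/
noncomputable def Efun (β z v : ℝ) : ℝ :=
  ∫ y in Set.Ioi (0 : ℝ),
    Real.exp (-z * Real.cosh y) *
      (2 * Real.sin (π / β) * (Real.cos (π / β) - Real.cos (v / β) * Real.cosh (y / β))) /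
      ((Real.cosh (y / β) - Real.cos ((v - π) / β)) *
        (Real.cosh (y / β) - Real.cos ((v + π) / β)))

/-!
With `c y = cosh y - 1` and `F = Ekernel β v`, `e^z E(z,v) = ∫₀^∞ e^{-z c} F`, whose `n`-th
derivative is `(-1)^n ∫ c^n e^{-z c} F`. Since `(z c)^{n-1} e^{-z c} ≤ (n-1)!`, the first bound
reduces to a `v`-uniform bound on `∫ c |F|`.

Partial fractions write `F` as minus the sum of `sin θ / (cosh (y/β) - cos θ)` over
`θ = (π ∓ v)/β`. Each term is at most `1 / sinh (y/β)`, and as `β < 1` this gives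
`c |F| ≤ 2 e^{-(1/β - 1) y}`. Near `y = 0` each term is instead dominated by `2βπ` times a Cauchy
density of scale `2β |sin (θ/2)|`, whose integral is at most `1` whatever the scale: this bounds
`∫ |F|`, hence `e^z E(z,v)`, uniformly in `v`.
-/

open Set Filter Topology
open scoped Nat NNReal
open ProbabilityTheory

lemma pow_mul_exp_neg_le_factorial {x : ℝ} (hx : 0 ≤ x) (k : ℕ) : x ^ k * exp (-x) ≤ k ! := by
  have h := pow_div_factorial_le_exp x hx k
  rw [div_le_iff₀ (by positivity)] at h
  rw [exp_neg, ← div_eq_mul_inv, div_le_iff₀ (exp_pos x)]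
  linarith

lemma pow_mul_exp_neg_mul_le {x a : ℝ} (hx : 0 ≤ x) (ha : 0 < a) (k : ℕ) :
    x ^ k * exp (-(a * x)) ≤ k ! / a ^ k := by
  rw [le_div_iff₀ (by positivity)]
  calc x ^ k * exp (-(a * x)) * a ^ k = (a * x) ^ k * exp (-(a * x)) := by ring
    _ ≤ k ! := pow_mul_exp_neg_le_factorial (by positivity) k

lemma abs_pow_mul_exp_neg_mul_mul_le {c f a z : ℝ} {k : ℕ} (hc : 0 ≤ c) (ha : 0 < a)
    (haz : a ≤ z) : |c ^ k * exp (-(z * c)) * f| ≤ k ! / a ^ k * |f| := by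
  rw [abs_mul, abs_mul, abs_of_nonneg (pow_nonneg hc k), abs_of_nonneg (exp_pos _).le]
  gcongr
  calc c ^ k * exp (-(z * c)) ≤ c ^ k * exp (-(a * c)) := by gcongr
    _ ≤ k ! / a ^ k := pow_mul_exp_neg_mul_le hc ha k

lemma abs_exp_neg_mul_mul_le {c z f : ℝ} (hc : 0 ≤ c) (hz : 0 ≤ z) :
    |exp (-(z * c)) * f| ≤ |f| := by
  rw [abs_mul, abs_of_pos (exp_pos _)]
  exact mul_le_of_le_one_left (abs_nonneg _) (exp_le_one_iff.2 (by nlinarith))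

lemma sinh_mul_exp_neg_le_of_le {x y : ℝ} (h : x ≤ y) : sinh x * exp (-x) ≤ sinh y * exp (-y) := by
  have key : ∀ t, sinh t * exp (-t) = (1 - exp (-(2 * t))) / 2 := fun t => by
    rw [sinh_eq, show -(2 * t) = -t + -t by ring, exp_add]
    field_simp
    rw [mul_sub, ← exp_add, neg_add_cancel, exp_zero, sq]
  rw [key, key]
  gcongr

lemma abs_sin_mul_sinh_le_cosh_sub_cos {u : ℝ} (hu : 0 ≤ u) (θ : ℝ) :
    |sin θ| * sinh u ≤ cosh u - cos θ := by
  have hsh : 0 ≤ sinh u := sinh_nonneg_iff.2 hu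
  have hcos : cos θ ≤ 1 := cos_le_one θ
  have hch : 1 ≤ cosh u := one_le_cosh u
  -- `cosh² u - (cos θ + |sin θ| sinh u)² = (|sin θ| - cos θ sinh u)²`
  nlinarith [sq_abs (sin θ), sin_sq_add_cos_sq θ, cosh_sq u, abs_nonneg (sin θ),
    sq_nonneg (|sin θ| - cos θ * sinh u), mul_nonneg (abs_nonneg (sin θ)) hsh]

lemma cosh_sub_cos_eq (u θ : ℝ) : cosh u - cos θ = 2 * (sinh (u / 2) ^ 2 + sin (θ / 2) ^ 2) := by
  have hu : cosh u = cosh (2 * (u / 2)) := by ring_nf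
  have hθ : cos θ = cos (2 * (θ / 2)) := by ring_nf
  rw [hu, hθ, cosh_two_mul, cos_two_mul, cosh_sq, cos_sq']
  ring

lemma cosh_sub_cos_pos {u : ℝ} (hu : u ≠ 0) (θ : ℝ) : 0 < cosh u - cos θ :=
  sub_pos.2 ((cos_le_one θ).trans_lt (one_lt_cosh.2 hu))

lemma abs_sin_div_cosh_sub_cos_le_inv_sinh {u : ℝ} (hu : 0 < u) (θ : ℝ) :
    |sin θ| / (cosh u - cos θ) ≤ 1 / sinh u := by
  rw [div_le_div_iff₀ (cosh_sub_cos_pos hu.ne' θ) (sinh_pos_iff.2 hu), one_mul]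
  exact abs_sin_mul_sinh_le_cosh_sub_cos hu.le θ

lemma abs_sin_div_cosh_sub_cos_le_cauchyPDFReal {β y : ℝ} (hβ : 0 < β) (hy : 0 < y) (θ : ℝ) :
    |sin θ| / (cosh (y / β) - cos θ) ≤
      2 * β * π * cauchyPDFReal 0 (2 * β * |sin (θ / 2)|).toNNReal y := by
  rw [cauchyPDFReal_def, Real.coe_toNNReal _ (by positivity)]
  set s := |sin (θ / 2)|
  have hsin : |sin θ| ≤ 2 * s := by
    rw [show θ = 2 * (θ / 2) by ring, sin_two_mul, abs_mul, abs_mul, abs_two]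
    nlinarith [abs_cos_le_one (θ / 2), abs_nonneg (sin (θ / 2)), abs_nonneg (cos (θ / 2))]
  have hD : 2 * ((y / β / 2) ^ 2 + s ^ 2) ≤ cosh (y / β) - cos θ := by
    rw [cosh_sub_cos_eq, sq_abs]
    gcongr
    exact self_le_sinh_iff.2 (by positivity)
  calc |sin θ| / (cosh (y / β) - cos θ) ≤ 2 * s / (2 * ((y / β / 2) ^ 2 + s ^ 2)) :=
        div_le_div₀ (by positivity) hsin (by positivity) hD
    _ = _ := by
      have : 0 < y ^ 2 + (2 * β * s) ^ 2 := by positivity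
      rw [sub_zero]
      field_simp

lemma setIntegral_cauchyPDFReal_le_one (x₀ : ℝ) (γ : ℝ≥0) (s : Set ℝ) :
    ∫ x in s, cauchyPDFReal x₀ γ x ≤ 1 := by
  refine (setIntegral_le_integral (integrable_cauchyPDFReal x₀)
    (.of_forall fun x => by rw [Pi.zero_apply, cauchyPDFReal_def]; positivity)).trans ?_
  rcases eq_or_ne γ 0 with rfl | hγ
  · simp
  · exact (integral_cauchyPDFReal_eq_one x₀ hγ).le

section LaplaceMoment

variable {α : Type*} [MeasurableSpace α] {μ : Measure α} {c F : α → ℝ}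

noncomputable def laplaceMoment (μ : Measure α) (c F : α → ℝ) (k : ℕ) (z : ℝ) : ℝ :=
  ∫ x, c x ^ k * exp (-(z * c x)) * F x ∂μ

lemma hasDerivAt_laplaceMoment (hc : ∀ x, 0 ≤ c x) (hcm : Measurable c) (hF : Integrable F μ)
    (k : ℕ) {z : ℝ} (hz : 0 < z) :
    HasDerivAt (laplaceMoment μ c F k) (-laplaceMoment μ c F (k + 1) z) z := by
  have hmeas : ∀ (j : ℕ) (ζ : ℝ),
      AEStronglyMeasurable (fun x => c x ^ j * exp (-(ζ * c x)) * F x) μ := fun j ζ => by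
    fun_prop
  have hz2 : 0 < z / 2 := half_pos hz
  have key := hasDerivAt_integral_of_dominated_loc_of_deriv_le (μ := μ) (x₀ := z)
    (F := fun ζ x => c x ^ k * exp (-(ζ * c x)) * F x)
    (F' := fun ζ x => -(c x ^ (k + 1) * exp (-(ζ * c x)) * F x))
    (bound := fun x => (k + 1)! / (z / 2) ^ (k + 1) * ‖F x‖)
    (Ioi_mem_nhds (half_lt_self hz)) (.of_forall (hmeas k))
    ((hF.norm.const_mul (k ! / z ^ k)).mono' (hmeas k z)
      (.of_forall fun x => by
        rw [norm_eq_abs, norm_eq_abs]; exact abs_pow_mul_exp_neg_mul_mul_le (hc x) hz le_rfl))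
    (hmeas (k + 1) z).neg
    (.of_forall fun x ζ hζ => by
      rw [norm_neg, norm_eq_abs, norm_eq_abs]
      exact abs_pow_mul_exp_neg_mul_mul_le (hc x) hz2 hζ.le)
    (hF.norm.const_mul _)
    (.of_forall fun x ζ _ => by
      refine ((((hasDerivAt_mul_const (x := ζ) (c x)).neg.exp).const_mul (c x ^ k)).mul_const
        (F x)).congr_deriv ?_
      change c x ^ k * (exp (-(ζ * c x)) * -c x) * F x = _
      ring)
  rw [laplaceMoment, ← integral_neg]
  exact key.2

lemma iteratedDeriv_laplaceMoment_zero (hc : ∀ x, 0 ≤ c x) (hcm : Measurable c)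
    (hF : Integrable F μ) (n : ℕ) {z : ℝ} (hz : 0 < z) :
    iteratedDeriv n (laplaceMoment μ c F 0) z = (-1) ^ n * laplaceMoment μ c F n z := by
  induction n generalizing z with
  | zero => simp
  | succ n ih =>
    have hev : iteratedDeriv n (laplaceMoment μ c F 0) =ᶠ[𝓝 z]
        fun w => (-1) ^ n * laplaceMoment μ c F n w :=
      (eventually_gt_nhds hz).mono fun w hw => ih hw
    rw [iteratedDeriv_succ, hev.deriv_eq,
      ((hasDerivAt_laplaceMoment hc hcm hF n hz).const_mul _).deriv, pow_succ]
    ring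

lemma integrable_mul_abs_of_integrable_mul (hc : ∀ x, 0 ≤ c x)
    (hcF : Integrable (fun x => c x * F x) μ) : Integrable (fun x => c x * |F x|) μ :=
  hcF.abs.congr (.of_forall fun x => by simp only [abs_mul, abs_of_nonneg (hc x)])

lemma abs_laplaceMoment_zero_le (hc : ∀ x, 0 ≤ c x) (hF : Integrable F μ) {z : ℝ} (hz : 0 ≤ z) :
    |laplaceMoment μ c F 0 z| ≤ ∫ x, |F x| ∂μ := by
  rw [← norm_eq_abs, laplaceMoment]
  refine norm_integral_le_of_norm_le hF.abs (.of_forall fun x => ?_)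
  simpa using abs_exp_neg_mul_mul_le (f := F x) (hc x) hz

lemma pow_mul_abs_laplaceMoment_succ_le (hc : ∀ x, 0 ≤ c x)
    (hcF : Integrable (fun x => c x * F x) μ) {z : ℝ} (hz : 0 ≤ z) (m : ℕ) :
    z ^ m * |laplaceMoment μ c F (m + 1) z| ≤ m ! * ∫ x, c x * |F x| ∂μ := by
  rw [← abs_of_nonneg (pow_nonneg hz m), ← abs_mul, ← norm_eq_abs, laplaceMoment,
    ← integral_const_mul, ← integral_const_mul]
  refine norm_integral_le_of_norm_le
    ((integrable_mul_abs_of_integrable_mul hc hcF).const_mul _) (.of_forall fun x => ?_)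
  have hzc : (z * c x) ^ m * exp (-(z * c x)) ≤ m ! :=
    pow_mul_exp_neg_le_factorial (mul_nonneg hz (hc x)) m
  calc ‖z ^ m * (c x ^ (m + 1) * exp (-(z * c x)) * F x)‖
      = (z * c x) ^ m * exp (-(z * c x)) * (c x * |F x|) := by
        rw [norm_eq_abs, abs_mul, abs_mul, abs_mul, abs_of_nonneg (pow_nonneg hz m),
          abs_of_nonneg (pow_nonneg (hc x) _), abs_of_nonneg (exp_pos _).le]
        ring
    _ ≤ m ! * (c x * |F x|) := by gcongr; exact mul_nonneg (hc x) (abs_nonneg _)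

lemma abs_laplaceMoment_zero_sub_le (hc : ∀ x, 0 ≤ c x) (hcm : Measurable c)
    (hF : Integrable F μ) (hcF : Integrable (fun x => c x * F x) μ) {h : ℝ} (hh : 0 ≤ h) :
    |laplaceMoment μ c F 0 h - laplaceMoment μ c F 0 0| ≤ h * ∫ x, c x * |F x| ∂μ := by
  have hint : Integrable (fun x => c x ^ 0 * exp (-(h * c x)) * F x) μ :=
    hF.abs.mono' (by fun_prop) (.of_forall fun x => by
      simpa using abs_exp_neg_mul_mul_le (f := F x) (hc x) hh)
  rw [← norm_eq_abs, laplaceMoment, laplaceMoment, ← integral_sub hint (by simpa using hF),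
    ← integral_const_mul]
  refine norm_integral_le_of_norm_le
    ((integrable_mul_abs_of_integrable_mul hc hcF).const_mul _) (.of_forall fun x => ?_)
  have hexp : 1 - exp (-(h * c x)) ≤ h * c x := by linarith [add_one_le_exp (-(h * c x))]
  have hexp1 : exp (-(h * c x)) ≤ 1 := exp_le_one_iff.2 (by nlinarith [hc x])
  calc ‖c x ^ 0 * exp (-(h * c x)) * F x - c x ^ 0 * exp (-(0 * c x)) * F x‖
      = (1 - exp (-(h * c x))) * |F x| := by
        rw [norm_eq_abs, ← abs_of_nonneg (sub_nonneg.2 hexp1), ← abs_mul, ← abs_neg]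
        exact congrArg abs (by simp only [pow_zero, one_mul, zero_mul, neg_zero, exp_zero]; ring)
    _ ≤ h * (c x * |F x|) := by rw [← mul_assoc]; gcongr

/-- For `z < 0` the moment integral typically diverges and takes the junk value `0`, so the
two-sided `deriv` at `0` is either the junk value `0` or the right derivative, whose difference
quotients are controlled by `abs_laplaceMoment_zero_sub_le`. -/
lemma abs_deriv_laplaceMoment_zero_le (hc : ∀ x, 0 ≤ c x) (hcm : Measurable c)
    (hF : Integrable F μ) (hcF : Integrable (fun x => c x * F x) μ) :
    |deriv (laplaceMoment μ c F 0) 0| ≤ ∫ x, c x * |F x| ∂μ := by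
  by_cases hd : DifferentiableAt ℝ (laplaceMoment μ c F 0) 0
  · have hslope := (hasDerivWithinAt_iff_tendsto_slope' (by simp : (0 : ℝ) ∉ Ioi 0)).1
      hd.hasDerivAt.hasDerivWithinAt
    refine le_of_tendsto ((continuous_abs.tendsto _).comp hslope) ?_
    filter_upwards [self_mem_nhdsWithin] with h (hh : 0 < h)
    rw [Function.comp_apply, slope_def_field, sub_zero, abs_div, abs_of_pos hh, div_le_iff₀ hh,
      mul_comm]
    exact abs_laplaceMoment_zero_sub_le hc hcm hF hcF hh.le
  · rw [deriv_zero_of_not_differentiableAt hd, abs_zero]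
    exact integral_nonneg fun x => mul_nonneg (hc x) (abs_nonneg _)

lemma abs_pow_mul_iteratedDeriv_laplaceMoment_le (hc : ∀ x, 0 ≤ c x) (hcm : Measurable c)
    (hF : Integrable F μ) (hcF : Integrable (fun x => c x * F x) μ) {z : ℝ} (hz : 0 ≤ z)
    (m : ℕ) :
    |z ^ m * iteratedDeriv (m + 1) (laplaceMoment μ c F 0) z| ≤ m ! * ∫ x, c x * |F x| ∂μ := by
  rcases hz.eq_or_lt with rfl | hz
  · cases m with
    | zero => simpa using abs_deriv_laplaceMoment_zero_le hc hcm hF hcF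
    | succ m =>
      simpa using mul_nonneg (Nat.cast_nonneg (α := ℝ) _)
        (integral_nonneg fun x => mul_nonneg (hc x) (abs_nonneg (F x)))
  · rw [iteratedDeriv_laplaceMoment_zero hc hcm hF _ hz, abs_mul, abs_mul, abs_pow, abs_pow,
      abs_neg, abs_one, one_pow, one_mul, abs_of_pos hz]
    exact pow_mul_abs_laplaceMoment_succ_le hc hcF hz.le m

end LaplaceMoment

noncomputable def Ekernel (β v y : ℝ) : ℝ :=
  2 * sin (π / β) * (cos (π / β) - cos (v / β) * cosh (y / β)) /
    ((cosh (y / β) - cos ((v - π) / β)) * (cosh (y / β) - cos ((v + π) / β)))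

lemma measurable_Ekernel (β v : ℝ) : Measurable (Ekernel β v) := by
  unfold Ekernel
  fun_prop

lemma exp_mul_Efun_eq_laplaceMoment (β z v : ℝ) :
    exp z * Efun β z v =
      laplaceMoment (volume.restrict (Ioi 0)) (fun y => cosh y - 1) (Ekernel β v) 0 z := by
  rw [Efun, laplaceMoment, ← integral_const_mul]
  congr 1
  funext y
  rw [Ekernel, mul_div_assoc, ← mul_assoc, ← exp_add, pow_zero, one_mul]
  ring_nf

lemma abs_Ekernel_le {β y : ℝ} (hβ : 0 < β) (hy : 0 < y) (v : ℝ) :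
    |Ekernel β v y| ≤ |sin ((π - v) / β)| / (cosh (y / β) - cos ((π - v) / β)) +
      |sin ((π + v) / β)| / (cosh (y / β) - cos ((π + v) / β)) := by
  have hu : y / β ≠ 0 := by positivity
  have hd₁ := cosh_sub_cos_pos hu ((π - v) / β)
  have hd₂ := cosh_sub_cos_pos hu ((π + v) / β)
  have hsplit : Ekernel β v y = -(sin ((π - v) / β) / (cosh (y / β) - cos ((π - v) / β)) +
      sin ((π + v) / β) / (cosh (y / β) - cos ((π + v) / β))) := by
    rw [Ekernel, show (v - π) / β = -((π - v) / β) by ring, show (v + π) / β = (π + v) / β by ring,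
      cos_neg, div_add_div _ _ hd₁.ne' hd₂.ne', ← neg_div, mul_comm (cosh _ - _)]
    congr 1
    rw [sub_div, add_div, sin_sub, cos_sub, sin_add, cos_add]
    linear_combination (-2 * sin (π / β) * cos (π / β)) * sin_sq_add_cos_sq (v / β)
  rw [hsplit, abs_neg]
  refine (abs_add_le _ _).trans_eq ?_
  rw [abs_div, abs_div, abs_of_pos hd₁, abs_of_pos hd₂]

lemma integrableOn_Ekernel_and_integral_abs_le {β : ℝ} (hβ : 0 < β) (v : ℝ) :
    IntegrableOn (Ekernel β v) (Ioi 0) ∧ ∫ y in Ioi 0, |Ekernel β v y| ≤ 4 * β * π := by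
  set γ₁ := (2 * β * |sin ((π - v) / β / 2)|).toNNReal
  set γ₂ := (2 * β * |sin ((π + v) / β / 2)|).toNNReal
  set g := fun y => 2 * β * π * (cauchyPDFReal 0 γ₁ y + cauchyPDFReal 0 γ₂ y)
  have hg : IntegrableOn g (Ioi 0) :=
    ((integrable_cauchyPDFReal 0).add (integrable_cauchyPDFReal 0)).const_mul _ |>.integrableOn
  have hle : ∀ y ∈ Ioi (0 : ℝ), |Ekernel β v y| ≤ g y := fun y hy => by
    refine (abs_Ekernel_le hβ hy v).trans ?_
    simp only [g, mul_add]
    exact add_le_add (abs_sin_div_cosh_sub_cos_le_cauchyPDFReal hβ hy _)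
      (abs_sin_div_cosh_sub_cos_le_cauchyPDFReal hβ hy _)
  have hint : IntegrableOn (Ekernel β v) (Ioi 0) :=
    hg.mono' (measurable_Ekernel β v).aestronglyMeasurable
      ((ae_restrict_iff' measurableSet_Ioi).2 (.of_forall hle))
  refine ⟨hint, (setIntegral_mono_on hint.abs hg measurableSet_Ioi hle).trans ?_⟩
  rw [integral_const_mul, integral_add (integrable_cauchyPDFReal 0).integrableOn
    (integrable_cauchyPDFReal 0).integrableOn]
  have h₁ := setIntegral_cauchyPDFReal_le_one 0 γ₁ (Ioi 0)
  have h₂ := setIntegral_cauchyPDFReal_le_one 0 γ₂ (Ioi 0)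
  calc 2 * β * π * ((∫ y in Ioi 0, cauchyPDFReal 0 γ₁ y) + ∫ y in Ioi 0, cauchyPDFReal 0 γ₂ y)
      ≤ 2 * β * π * (1 + 1) := by gcongr
    _ = 4 * β * π := by ring

lemma cosh_sub_one_mul_abs_Ekernel_le {β y : ℝ} (hβ0 : 0 < β) (hβ1 : β ≤ 1) (hy : 0 < y)
    (v : ℝ) : (cosh y - 1) * |Ekernel β v y| ≤ 2 * exp (-(1 / β - 1) * y) := by
  have hu : 0 < y / β := by positivity
  have hsh : 0 < sinh (y / β) := sinh_pos_iff.2 hu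
  have hE : |Ekernel β v y| ≤ 2 / sinh (y / β) := by
    refine (abs_Ekernel_le hβ0 hy v).trans ?_
    rw [show 2 / sinh (y / β) = 1 / sinh (y / β) + 1 / sinh (y / β) by ring]
    exact add_le_add (abs_sin_div_cosh_sub_cos_le_inv_sinh hu _)
      (abs_sin_div_cosh_sub_cos_le_inv_sinh hu _)
  have hcosh : cosh y - 1 ≤ sinh y := by
    linarith [cosh_sub_sinh y, exp_le_one_iff.2 (neg_nonpos.2 hy.le)]
  have hsinh : sinh y ≤ exp (-(1 / β - 1) * y) * sinh (y / β) :=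
    calc sinh y = sinh y * exp (-y) * exp y := by
          rw [mul_assoc, ← exp_add, neg_add_cancel, exp_zero, mul_one]
      _ ≤ sinh (y / β) * exp (-(y / β)) * exp y :=
          mul_le_mul_of_nonneg_right (sinh_mul_exp_neg_le_of_le (le_div_self hy.le hβ0 hβ1))
            (exp_pos y).le
      _ = exp (-(1 / β - 1) * y) * sinh (y / β) := by
          rw [mul_assoc, ← exp_add, mul_comm]
          ring_nf
  calc (cosh y - 1) * |Ekernel β v y| ≤ sinh y * (2 / sinh (y / β)) := by
        gcongr
    _ ≤ exp (-(1 / β - 1) * y) * sinh (y / β) * (2 / sinh (y / β)) := by gcongr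
    _ = 2 * exp (-(1 / β - 1) * y) := by field_simp

lemma one_div_sub_one_pos {β : ℝ} (hβ0 : 0 < β) (hβ1 : β < 1) : 0 < 1 / β - 1 := by
  rw [one_div, sub_pos]
  exact (one_lt_inv₀ hβ0).2 hβ1

lemma integrableOn_cosh_sub_one_mul_Ekernel_and_integral_le {β : ℝ} (hβ0 : 0 < β) (hβ1 : β < 1)
    (v : ℝ) :
    IntegrableOn (fun y => (cosh y - 1) * Ekernel β v y) (Ioi 0) ∧
      ∫ y in Ioi 0, (cosh y - 1) * |Ekernel β v y| ≤ 2 / (1 / β - 1) := by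
  have hδ := one_div_sub_one_pos hβ0 hβ1
  have hg : IntegrableOn (fun y => 2 * exp (-(1 / β - 1) * y)) (Ioi 0) :=
    (exp_neg_integrableOn_Ioi 0 hδ).const_mul 2
  have hle : ∀ y ∈ Ioi (0 : ℝ), |(cosh y - 1) * Ekernel β v y| ≤ 2 * exp (-(1 / β - 1) * y) :=
    fun y hy => by
      rw [abs_mul, abs_of_nonneg (sub_nonneg.2 (one_le_cosh y))]
      exact cosh_sub_one_mul_abs_Ekernel_le hβ0 hβ1.le hy v
  have hint : IntegrableOn (fun y => (cosh y - 1) * Ekernel β v y) (Ioi 0) :=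
    hg.mono' (((continuous_cosh.measurable.sub_const 1).mul
      (measurable_Ekernel β v)).aestronglyMeasurable)
      ((ae_restrict_iff' measurableSet_Ioi).2 (.of_forall hle))
  refine ⟨hint, (setIntegral_mono_on ?_ hg measurableSet_Ioi fun y hy => ?_).trans_eq ?_⟩
  · exact hint.abs.congr (.of_forall fun y => by simp [abs_mul, abs_of_nonneg, one_le_cosh])
  · exact cosh_sub_one_mul_abs_Ekernel_le hβ0 hβ1.le hy v
  · rw [integral_const_mul, integral_exp_mul_Ioi (by linarith) 0, mul_zero, exp_zero]
    field_simp

/-- For each `n ≥ 1` there is `C_n` with `|z^{n−1} (dⁿ/dzⁿ)(e^z E(z,v))| ≤ C_n`, and there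
is `C` with `|e^z E(z,v)| ≤ C`, for all `z ≥ 0` and `v ≢ ±π (mod 2βπ)`. -/
theorem Efun_ez_z_derivative_bounds (β : ℝ) (hβ0 : 0 < β) (hβ1 : β < 1) :
    (∀ n : ℕ, 1 ≤ n →
      ∃ C > 0, ∀ z : ℝ, 0 ≤ z → ∀ v : ℝ,
        (∀ k : ℤ, v + 2 * (k : ℝ) * β * π ≠ π ∧ v + 2 * (k : ℝ) * β * π ≠ -π) →
        |z ^ (n - 1) * iteratedDeriv n (fun ζ => Real.exp ζ * Efun β ζ v) z| ≤ C) ∧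
    (∃ C > 0, ∀ z : ℝ, 0 ≤ z → ∀ v : ℝ,
      (∀ k : ℤ, v + 2 * (k : ℝ) * β * π ≠ π ∧ v + 2 * (k : ℝ) * β * π ≠ -π) →
      |Real.exp z * Efun β z v| ≤ C) := by
  have hc : ∀ y, 0 ≤ cosh y - 1 := fun y => sub_nonneg.2 (one_le_cosh y)
  have hcm : Measurable fun y => cosh y - 1 := continuous_cosh.measurable.sub_const 1
  have hδ := one_div_sub_one_pos hβ0 hβ1
  refine ⟨fun n hn => ?_, ⟨4 * β * π, by positivity, fun z hz v _ => ?_⟩⟩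
  · obtain ⟨m, rfl⟩ := Nat.exists_eq_add_of_le' hn
    refine ⟨m ! * (2 / (1 / β - 1)), by positivity, fun z hz v _ => ?_⟩
    obtain ⟨hF, -⟩ := integrableOn_Ekernel_and_integral_abs_le hβ0 v
    obtain ⟨hcF, hbound⟩ := integrableOn_cosh_sub_one_mul_Ekernel_and_integral_le hβ0 hβ1 v
    rw [Nat.add_sub_cancel, funext fun ζ => exp_mul_Efun_eq_laplaceMoment β ζ v]
    exact (abs_pow_mul_iteratedDeriv_laplaceMoment_le hc hcm hF hcF hz m).trans
      (mul_le_mul_of_nonneg_left hbound (Nat.cast_nonneg _))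
  · obtain ⟨hF, hbound⟩ := integrableOn_Ekernel_and_integral_abs_le hβ0 v
    rw [exp_mul_Efun_eq_laplaceMoment]
    exact (abs_laplaceMoment_zero_le hc hF hz).trans hbound
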